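/- arXiv:2304.14292 — 11 statements merged into one kernel-verified Lean document; each statement's English description precedes it below -/
import Mathlib

section
/- Let K : ℂ → Matrix (Fin n) (Fin n) ℂ and B : ℂ → Matrix (Fin n) (Fin m) ℂ be matrix-valued functions, and σ ∈ ℂ a point where K(σ) is invertible. Let V ∈ Matrix (Fin n) (Fin r) ℂ and W ∈ Matrix (Fin n) (Fin r) ℂ be such that every column of K(σ)⁻¹ * B(σ) lies in the column span of V, and such that the reduced matrix K̂(σ) := Wᴴ * K(σ) * V is invertible. Then for the reduced quantities Ĉ(σ) := C(σ) * V and B̂(σ) := Wᴴ * B(σ) (for any C : ℂ → Matrix (Fin p) (Fin n) ℂ), the reduced transfer function interpolates the full one: C(σ) * K(σ)⁻¹ * B(σ) = Ĉ(σ) * K̂(σ)⁻¹ * B̂(σ). -/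
open Matrix Kronecker

theorem stmt_0 {n m p r : ℕ}
    (K : ℂ → Matrix (Fin n) (Fin n) ℂ)
    (B : ℂ → Matrix (Fin n) (Fin m) ℂ)
    (C : ℂ → Matrix (Fin p) (Fin n) ℂ)
    (σ : ℂ) (hK : IsUnit (K σ))
    (V W : Matrix (Fin n) (Fin r) ℂ)
    (hV : ∃ X : Matrix (Fin r) (Fin m) ℂ, V * X = (K σ)⁻¹ * B σ)
    (hKhat : IsUnit (Wᴴ * K σ * V)) :
    C σ * (K σ)⁻¹ * B σ = (C σ * V) * (Wᴴ * K σ * V)⁻¹ * (Wᴴ * B σ) := by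
  obtain ⟨X, hX⟩ := hV
  have hB : K σ * (V * X) = B σ := by
    rw [hX, ← Matrix.mul_assoc, Matrix.mul_nonsing_inv _ (hK.map (Matrix.detMonoidHom)),
      Matrix.one_mul]
  have h2 : Wᴴ * B σ = (Wᴴ * K σ * V) * X := by
    rw [← hB]; simp only [Matrix.mul_assoc]
  rw [h2, Matrix.mul_assoc (C σ * V), ← Matrix.mul_assoc _ (Wᴴ * K σ * V),
    Matrix.nonsing_inv_mul _ (hKhat.map (Matrix.detMonoidHom)), Matrix.one_mul,
    Matrix.mul_assoc (C σ), ← hX, ← Matrix.mul_assoc]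
end

section
/- Let K : ℂ → Matrix (Fin n) (Fin n) ℂ, C : ℂ → Matrix (Fin p) (Fin n) ℂ, B : ℂ → Matrix (Fin n) (Fin m) ℂ, and σ ∈ ℂ with K(σ) invertible. Suppose W ∈ Matrix (Fin n) (Fin r) ℂ is such that every column of (K(σ)⁻¹)ᴴ * (C(σ))ᴴ lies in the column span of W, V ∈ Matrix (Fin n) (Fin r) ℂ is arbitrary, and K̂(σ) := Wᴴ K(σ) V is invertible. Then C(σ) K(σ)⁻¹ B(σ) = (C(σ)V) (K̂(σ))⁻¹ (Wᴴ B(σ)). -/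
open Matrix Kronecker

theorem stmt_1 {n m p r : ℕ}
    (K : ℂ → Matrix (Fin n) (Fin n) ℂ)
    (C : ℂ → Matrix (Fin p) (Fin n) ℂ)
    (B : ℂ → Matrix (Fin n) (Fin m) ℂ)
    (σ : ℂ) (hK : IsUnit (K σ))
    (V W : Matrix (Fin n) (Fin r) ℂ)
    (hW : ∃ X : Matrix (Fin r) (Fin p) ℂ, W * X = ((K σ)⁻¹)ᴴ * (C σ)ᴴ)
    (hKhat : IsUnit (Wᴴ * K σ * V)) :
    C σ * (K σ)⁻¹ * B σ = (C σ * V) * (Wᴴ * K σ * V)⁻¹ * (Wᴴ * B σ) := by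
  obtain ⟨X, hX⟩ := hW
  have h1 : Xᴴ * Wᴴ = C σ * (K σ)⁻¹ := by
    have := congrArg conjTranspose hX
    simpa [conjTranspose_mul] using this
  have h2 : C σ * V = Xᴴ * (Wᴴ * K σ * V) := by
    calc C σ * V = C σ * (K σ)⁻¹ * (K σ) * V := by
          rw [Matrix.mul_assoc (C σ), Matrix.nonsing_inv_mul _ (Matrix.isUnit_iff_isUnit_det _ |>.mp hK), Matrix.mul_one]
      _ = Xᴴ * (Wᴴ * K σ * V) := by rw [← h1]; rw [Matrix.mul_assoc, Matrix.mul_assoc, Matrix.mul_assoc]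
  rw [h2, Matrix.mul_assoc _ _ (Wᴴ * K σ * V)⁻¹,
    Matrix.mul_nonsing_inv _ (Matrix.isUnit_iff_isUnit_det _ |>.mp hKhat), Matrix.mul_one,
    ← h1]
  rw [Matrix.mul_assoc]
end

section
/- Let K : ℂ → Matrix (Fin n) (Fin n) ℂ, C : ℂ → Matrix (Fin p) (Fin n) ℂ, σ ∈ ℂ with K(σ) invertible, and V, W ∈ Matrix (Fin n) (Fin r) ℂ with K̂ := Wᴴ K(σ) V invertible. If every column of (K(σ)⁻¹)ᴴ (C(σ))ᴴ lies in the column span of W, then (C(σ) V) * K̂⁻¹ * Wᴴ = C(σ) * K(σ)⁻¹. -/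
open Matrix Kronecker

theorem stmt_4 {n p r : ℕ}
    (K : ℂ → Matrix (Fin n) (Fin n) ℂ)
    (C : ℂ → Matrix (Fin p) (Fin n) ℂ)
    (σ : ℂ) (hK : IsUnit (K σ))
    (V W : Matrix (Fin n) (Fin r) ℂ)
    (hKhat : IsUnit (Wᴴ * K σ * V))
    (hW : ∃ X : Matrix (Fin r) (Fin p) ℂ, W * X = ((K σ)⁻¹)ᴴ * (C σ)ᴴ) :
    (C σ * V) * (Wᴴ * K σ * V)⁻¹ * Wᴴ = C σ * (K σ)⁻¹ := by
  obtain ⟨X, hX⟩ := hW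
  have hKd : IsUnit (K σ).det := (Matrix.isUnit_iff_isUnit_det _).mp hK
  have hKhd : IsUnit (Wᴴ * K σ * V).det := (Matrix.isUnit_iff_isUnit_det _).mp hKhat
  have h1 : C σ * (K σ)⁻¹ = Xᴴ * Wᴴ := by
    calc C σ * (K σ)⁻¹ = (((K σ)⁻¹)ᴴ * (C σ)ᴴ)ᴴ := by
          rw [conjTranspose_mul, conjTranspose_conjTranspose, conjTranspose_conjTranspose]
      _ = (W * X)ᴴ := by rw [hX]
      _ = Xᴴ * Wᴴ := by rw [conjTranspose_mul]
  have h2 : C σ * V = Xᴴ * (Wᴴ * K σ * V) := by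
    have : C σ * V = C σ * (K σ)⁻¹ * (K σ * V) := by
      rw [Matrix.mul_assoc, ← Matrix.mul_assoc (K σ)⁻¹, Matrix.nonsing_inv_mul _ hKd,
        Matrix.one_mul]
    rw [this, h1, Matrix.mul_assoc, Matrix.mul_assoc]
  rw [h2, Matrix.mul_assoc Xᴴ, Matrix.mul_nonsing_inv _ hKhd, Matrix.mul_one, h1]
end

section
/- Let C : ℂ → Matrix (Fin p) (Fin n) ℂ, K : ℂ → Matrix (Fin n) (Fin n) ℂ, B : ℂ → Matrix (Fin n) (Fin m) ℂ, N : ℂ → Matrix (Fin n) (Fin (n*m)) ℂ be matrix-valued functions and σ₁, σ₂ ∈ ℂ points where K(σ₁) and K(σ₂) are invertible. Let V ∈ Matrix (Fin n) (Fin r) ℂ contain in its column span the columns of V₁ := K(σ₁)⁻¹ B(σ₁) and of V₂ := K(σ₂)⁻¹ N(σ₁) (I_m ⊗ V₁), and let W ∈ Matrix (Fin n) (Fin r) ℂ be such that Wᴴ K(σ₁) V and Wᴴ K(σ₂) V are invertible. Then the reduced second-level generalized transfer function Ĝ₂(σ₁,σ₂) := Ĉ(σ₂) K̂(σ₂)⁻¹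 N̂(σ₁) (I_m ⊗ K̂(σ₁)⁻¹ B̂(σ₁)) with Ĉ(s)=C(s)V, K̂(s)=WᴴK(s)V, B̂(s)=WᴴB(s), N̂(s)=WᴴN(s)(I_m ⊗ V) satisfies Ĝ₂(σ₁,σ₂) = C(σ₂) K(σ₂)⁻¹ N(σ₁) (I_m ⊗ K(σ₁)⁻¹ B(σ₁)). -/
/-!
Every factor of the reduced transfer function is a Petrov–Galerkin solve `(Wᴴ K V)⁻¹ Wᴴ b`, and
such a solve is exact whenever the full solution `K⁻¹ b` lies in the range of `V`. The span
condition on `V₁` makes the inner solve return the coordinates `X₁` of `V₁`, so that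
`N̂(σ₁) (I ⊗ X₁) = Wᴴ N(σ₁) (I ⊗ V₁)`; the span condition on `V₂` then makes the outer solve
return the coordinates `X₂` of `V₂`, and `C(σ₂) V X₂ = C(σ₂) V₂` is the full transfer function.
-/

open Matrix Kronecker

namespace Matrix

variable {R : Type*} [CommRing R] {l n r : Type*}
  [Fintype n] [DecidableEq n] [Fintype r] [DecidableEq r]

theorem inv_projected_mul_eq_of_mul_eq_inv_mul (W : Matrix r n R) {K : Matrix n n R}
    {V : Matrix n r R} {b : Matrix n l R} {X : Matrix r l R} (hK : IsUnit K)
    (hKhat : IsUnit (W * K * V)) (hX : V * X = K⁻¹ * b) :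
    (W * K * V)⁻¹ * (W * b) = X := by
  have hb : W * b = W * K * V * X := by
    rw [Matrix.mul_assoc _ V, hX, Matrix.mul_assoc,
      mul_nonsing_inv_cancel_left _ _ ((isUnit_iff_isUnit_det K).mp hK)]
  rw [hb, nonsing_inv_mul_cancel_left _ _ ((isUnit_iff_isUnit_det _).mp hKhat)]

end Matrix

theorem stmt_5 {n m p r : ℕ}
    (C : ℂ → Matrix (Fin p) (Fin n) ℂ)
    (K : ℂ → Matrix (Fin n) (Fin n) ℂ)
    (B : ℂ → Matrix (Fin n) (Fin m) ℂ)
    (N : ℂ → Matrix (Fin n) (Fin m × Fin n) ℂ)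
    (σ₁ σ₂ : ℂ) (hK1 : IsUnit (K σ₁)) (hK2 : IsUnit (K σ₂))
    (V W : Matrix (Fin n) (Fin r) ℂ)
    (V₁ : Matrix (Fin n) (Fin m) ℂ) (hV₁ : V₁ = (K σ₁)⁻¹ * B σ₁)
    (V₂ : Matrix (Fin n) (Fin m × Fin m) ℂ)
    (hV₂ : V₂ = (K σ₂)⁻¹ * (N σ₁ * ((1 : Matrix (Fin m) (Fin m) ℂ) ⊗ₖ V₁)))
    (hVspan₁ : ∃ X, V * X = V₁) (hVspan₂ : ∃ X, V * X = V₂)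
    (hKhat1 : IsUnit (Wᴴ * K σ₁ * V)) (hKhat2 : IsUnit (Wᴴ * K σ₂ * V)) :
    (C σ₂ * V) * (Wᴴ * K σ₂ * V)⁻¹ *
        (Wᴴ * N σ₁ * ((1 : Matrix (Fin m) (Fin m) ℂ) ⊗ₖ V)) *
        ((1 : Matrix (Fin m) (Fin m) ℂ) ⊗ₖ ((Wᴴ * K σ₁ * V)⁻¹ * (Wᴴ * B σ₁)))
      = C σ₂ * (K σ₂)⁻¹ * N σ₁ *
        ((1 : Matrix (Fin m) (Fin m) ℂ) ⊗ₖ ((K σ₁)⁻¹ * B σ₁)) := by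
  obtain ⟨X₁, hX₁⟩ : ∃ X : Matrix (Fin r) (Fin m) ℂ, V * X = V₁ := hVspan₁
  obtain ⟨X₂, hX₂⟩ : ∃ X : Matrix (Fin r) (Fin m × Fin m) ℂ, V * X = V₂ := hVspan₂
  have hsolve₁ : (Wᴴ * K σ₁ * V)⁻¹ * (Wᴴ * B σ₁) = X₁ :=
    inv_projected_mul_eq_of_mul_eq_inv_mul Wᴴ hK1 hKhat1 (hX₁.trans hV₁)
  have hsolve₂ :
      (Wᴴ * K σ₂ * V)⁻¹ * (Wᴴ * (N σ₁ * ((1 : Matrix (Fin m) (Fin m) ℂ) ⊗ₖ V₁))) = X₂ :=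
    inv_projected_mul_eq_of_mul_eq_inv_mul Wᴴ hK2 hKhat2 (hX₂.trans hV₂)
  have hlift : ((1 : Matrix (Fin m) (Fin m) ℂ) ⊗ₖ V) *
      ((1 : Matrix (Fin m) (Fin m) ℂ) ⊗ₖ X₁) = (1 : Matrix (Fin m) (Fin m) ℂ) ⊗ₖ V₁ := by
    rw [← mul_kronecker_mul, Matrix.one_mul, hX₁]
  rw [hsolve₁, ← hV₁]
  calc C σ₂ * V * (Wᴴ * K σ₂ * V)⁻¹ * (Wᴴ * N σ₁ * ((1 : Matrix (Fin m) (Fin m) ℂ) ⊗ₖ V)) *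
        ((1 : Matrix (Fin m) (Fin m) ℂ) ⊗ₖ X₁)
      = C σ₂ * V *
          ((Wᴴ * K σ₂ * V)⁻¹ * (Wᴴ * (N σ₁ * ((1 : Matrix (Fin m) (Fin m) ℂ) ⊗ₖ V₁)))) := by
        simp only [← hlift, Matrix.mul_assoc]
    _ = C σ₂ * V₂ := by rw [hsolve₂, Matrix.mul_assoc, hX₂]
    _ = C σ₂ * (K σ₂)⁻¹ * N σ₁ * ((1 : Matrix (Fin m) (Fin m) ℂ) ⊗ₖ V₁) := by
        simp only [hV₂, Matrix.mul_assoc]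
end

section
/- Let C : ℂ → Matrix (Fin p) (Fin n) ℂ, K : ℂ → Matrix (Fin n) (Fin n) ℂ, B : ℂ → Matrix (Fin n) (Fin m) ℂ, H : ℂ → ℂ → Matrix (Fin n) (Fin (n*n)) ℂ, and σ₁, σ₂, σ₃ ∈ ℂ with K(σ₁), K(σ₂), K(σ₃) invertible. Let V ∈ Matrix (Fin n) (Fin r) ℂ contain in its column span the columns of V₁ := K(σ₁)⁻¹B(σ₁), V₂ := K(σ₂)⁻¹B(σ₂), and V₃ := K(σ₃)⁻¹ H(σ₂,σ₁) (V₂ ⊗ V₁), and let W ∈ Matrix (Fin n) (Fin r) ℂ be such that Wᴴ K(σⱼ) V is invertible for j = 1,2,3. Then with Ĉ(s)=C(s)V, K̂(s)=WᴴK(s)V, B̂(s)=WᴴB(s), Ĥ(s₁,s₂)=WᴴH(s₁,s₂)(V ⊗ V), the reduced transfer function satisfies Ĉ(σ₃) K̂(σ₃)⁻¹ Ĥ(σ₂,σ₁) (K̂(σ₂)⁻¹B̂(σ₂) ⊗ K̂(σ₁)⁻¹B̂(σ₁)) = C(σ₃) K(σ₃)⁻¹ H(σ₂,σ₁) (K(σ₂)⁻¹B(σ₂)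 ⊗ K(σ₁)⁻¹B(σ₁)). -/
open Matrix Kronecker

/-!
Whenever `K⁻¹ Y = V X`, the reduced solve `(Wᴴ K V)⁻¹ (Wᴴ Y)` returns
exactly `X`, because `Wᴴ K V X = Wᴴ Y`. At `σ₁, σ₂` this makes the reduced first-level solutions
the coordinates `X₁, X₂` of `V₁, V₂`. By the mixed-product property
`Ĥ (X₂ ⊗ X₁) = Wᴴ H (V X₂ ⊗ V X₁) = Wᴴ H (V₂ ⊗ V₁)`, so the same fact at `σ₃` returns the
coordinates `X₃` of `V₃`, and `Ĉ(σ₃) X₃ = C(σ₃) V₃`.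
-/

theorem Matrix.inv_mul_mul_eq_of_mul_eq_inv_mul {ι μ α R : Type*}
    [Fintype ι] [DecidableEq ι] [Fintype μ] [DecidableEq μ] [CommRing R]
    {W : Matrix μ ι R} {K : Matrix ι ι R} {V : Matrix ι μ R} {X : Matrix μ α R}
    {Y : Matrix ι α R} (hK : IsUnit K) (hKhat : IsUnit (W * K * V))
    (hX : V * X = K⁻¹ * Y) :
    (W * K * V)⁻¹ * (W * Y) = X := by
  have hreduced : W * K * V * X = W * Y := by
    rw [Matrix.mul_assoc, hX, Matrix.mul_assoc,
      mul_nonsing_inv_cancel_left _ _ ((isUnit_iff_isUnit_det K).mp hK)]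
  rw [← hreduced, nonsing_inv_mul_cancel_left _ _ ((isUnit_iff_isUnit_det _).mp hKhat)]

theorem stmt_6 {n m p r : ℕ}
    (C : ℂ → Matrix (Fin p) (Fin n) ℂ)
    (K : ℂ → Matrix (Fin n) (Fin n) ℂ)
    (B : ℂ → Matrix (Fin n) (Fin m) ℂ)
    (H : ℂ → ℂ → Matrix (Fin n) (Fin n × Fin n) ℂ)
    (σ₁ σ₂ σ₃ : ℂ)
    (hK1 : IsUnit (K σ₁)) (hK2 : IsUnit (K σ₂)) (hK3 : IsUnit (K σ₃))
    (V W : Matrix (Fin n) (Fin r) ℂ)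
    (V₁ : Matrix (Fin n) (Fin m) ℂ) (hV₁ : V₁ = (K σ₁)⁻¹ * B σ₁)
    (V₂ : Matrix (Fin n) (Fin m) ℂ) (hV₂ : V₂ = (K σ₂)⁻¹ * B σ₂)
    (V₃ : Matrix (Fin n) (Fin m × Fin m) ℂ)
    (hV₃ : V₃ = (K σ₃)⁻¹ * (H σ₂ σ₁ * (V₂ ⊗ₖ V₁)))
    (hVspan₁ : ∃ X, V * X = V₁) (hVspan₂ : ∃ X, V * X = V₂)
    (hVspan₃ : ∃ X, V * X = V₃)
    (hKhat1 : IsUnit (Wᴴ * K σ₁ * V)) (hKhat2 : IsUnit (Wᴴ * K σ₂ * V))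
    (hKhat3 : IsUnit (Wᴴ * K σ₃ * V)) :
    (C σ₃ * V) * (Wᴴ * K σ₃ * V)⁻¹ * (Wᴴ * H σ₂ σ₁ * (V ⊗ₖ V)) *
        (((Wᴴ * K σ₂ * V)⁻¹ * (Wᴴ * B σ₂)) ⊗ₖ ((Wᴴ * K σ₁ * V)⁻¹ * (Wᴴ * B σ₁)))
      = C σ₃ * (K σ₃)⁻¹ * H σ₂ σ₁ *
        (((K σ₂)⁻¹ * B σ₂) ⊗ₖ ((K σ₁)⁻¹ * B σ₁)) := by
  subst hV₁ hV₂ hV₃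
  -- in the hypotheses `∃ X, V * X = _` elaborates `X` as a `CStarMatrix`; restate it over `Matrix`
  obtain ⟨X₁, hX₁⟩ : ∃ X : Matrix (Fin r) (Fin m) ℂ, V * X = _ := hVspan₁
  obtain ⟨X₂, hX₂⟩ : ∃ X : Matrix (Fin r) (Fin m) ℂ, V * X = _ := hVspan₂
  obtain ⟨X₃, hX₃⟩ : ∃ X : Matrix (Fin r) (Fin m × Fin m) ℂ, V * X = _ := hVspan₃
  have h₁ : (Wᴴ * K σ₁ * V)⁻¹ * (Wᴴ * B σ₁) = X₁ :=
    Matrix.inv_mul_mul_eq_of_mul_eq_inv_mul hK1 hKhat1 hX₁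
  have h₂ : (Wᴴ * K σ₂ * V)⁻¹ * (Wᴴ * B σ₂) = X₂ :=
    Matrix.inv_mul_mul_eq_of_mul_eq_inv_mul hK2 hKhat2 hX₂
  have h₃ : (Wᴴ * K σ₃ * V)⁻¹ * (Wᴴ * H σ₂ σ₁ * (V ⊗ₖ V) * (X₂ ⊗ₖ X₁)) = X₃ := by
    rw [Matrix.mul_assoc (Wᴴ * H σ₂ σ₁), ← mul_kronecker_mul, hX₁, hX₂,
      Matrix.mul_assoc Wᴴ (H σ₂ σ₁)]
    exact Matrix.inv_mul_mul_eq_of_mul_eq_inv_mul hK3 hKhat3 hX₃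
  calc _ = C σ₃ * V * ((Wᴴ * K σ₃ * V)⁻¹ * (Wᴴ * H σ₂ σ₁ * (V ⊗ₖ V) * (X₂ ⊗ₖ X₁))) := by
        rw [h₁, h₂]; simp only [Matrix.mul_assoc]
    _ = _ := by rw [h₃, Matrix.mul_assoc, hX₃]; simp only [Matrix.mul_assoc]
end

section
/- Let K : ℂ → Matrix (Fin n) (Fin n) ℂ, C : ℂ → Matrix (Fin p) (Fin n) ℂ, B : ℂ → Matrix (Fin n) (Fin m) ℂ, N : ℂ → Matrix (Fin n) (Fin (n*m)) ℂ be matrix-valued functions, and σ₁, σ₂ ∈ ℂ points with K(σ₁) and K(σ₂) invertible. Suppose V contains K(σ₁)⁻¹B(σ₁) in its column span, W contains (K(σ₂)⁻¹)ᴴ(C(σ₂))ᴴ in its column span, and Wᴴ K(σ₁) V and Wᴴ K(σ₂) V are invertible. Then the reduced second-level generalized transfer function interpolates: Ĉ(σ₂) K̂(σ₂)⁻¹ N̂(σ₁) (I_m ⊗ K̂(σ₁)⁻¹ B̂(σ₁)) = C(σ₂) K(σ₂)⁻¹ N(σ₁) (I_m ⊗ K(σ₁)⁻¹ B(σ₁)).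 -/
/-!
Write `K̂ = Wᴴ K V`. The matrix `V K̂⁻¹ Wᴴ K` is an oblique projection onto the column span of `V`,
so `V K̂(σ₁)⁻¹ B̂(σ₁) = K(σ₁)⁻¹ B(σ₁)`; dually `Ĉ(σ₂) K̂(σ₂)⁻¹ Wᴴ = C(σ₂) K(σ₂)⁻¹` because the rows
of `C(σ₂) K(σ₂)⁻¹` lie in the row span of `Wᴴ`. By the mixed-product rule
`(I ⊗ V)(I ⊗ x) = I ⊗ V x`, the reduced expression is the full one with `N(σ₁)` flanked by exactly
these two factors, so nothing about `N` beyond its value is needed.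
-/

open Matrix Kronecker

namespace Matrix

variable {ι κ μ ν R : Type*}

section Projection

variable [Fintype ι] [DecidableEq ι] [Fintype κ] [DecidableEq κ] [CommRing R]

theorem mul_inv_mul_mul_eq_inv_mul_of_exists_mul_eq {L : Matrix κ ι R} {A : Matrix ι ι R}
    {V : Matrix ι κ R} {b : Matrix ι μ R} (hA : IsUnit A) (hLAV : IsUnit (L * A * V))
    (hb : ∃ X : Matrix κ μ R, V * X = A⁻¹ * b) :
    V * ((L * A * V)⁻¹ * (L * b)) = A⁻¹ * b := by
  obtain ⟨X, hX⟩ := hb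
  have hLb : L * b = L * A * V * X := by
    rw [Matrix.mul_assoc (L * A), hX, Matrix.mul_assoc,
      mul_nonsing_inv_cancel_left A _ ((isUnit_iff_isUnit_det A).mp hA)]
  rw [hLb, nonsing_inv_mul_cancel_left _ _ ((isUnit_iff_isUnit_det _).mp hLAV), hX]

theorem mul_mul_inv_mul_eq_mul_inv_of_exists_mul_eq {L : Matrix κ ι R} {A : Matrix ι ι R}
    {V : Matrix ι κ R} {c : Matrix ν ι R} (hA : IsUnit A) (hLAV : IsUnit (L * A * V))
    (hc : ∃ Y : Matrix ν κ R, Y * L = c * A⁻¹) :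
    c * V * (L * A * V)⁻¹ * L = c * A⁻¹ := by
  obtain ⟨Y, hY⟩ := hc
  have hcV : c * V = Y * (L * A * V) := by
    rw [← nonsing_inv_mul_cancel_right A c ((isUnit_iff_isUnit_det A).mp hA), ← hY]
    simp only [Matrix.mul_assoc]
  rw [hcV, mul_nonsing_inv_cancel_right _ _ ((isUnit_iff_isUnit_det _).mp hLAV), hY]

end Projection

theorem exists_mul_conjTranspose_eq_of_exists_mul_eq [Fintype κ] [CommSemiring R] [StarRing R]
    {W : Matrix ι κ R} {a : Matrix ι ν R} (h : ∃ X : Matrix κ ν R, W * X = a) :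
    ∃ Y : Matrix ν κ R, Y * Wᴴ = aᴴ :=
  let ⟨X, hX⟩ := h
  ⟨Xᴴ, by rw [← conjTranspose_mul, hX]⟩

theorem one_kronecker_mul_one_kronecker {l : Type*} [Fintype l] [DecidableEq l] [Fintype κ]
    [CommSemiring R] (P : Matrix ι κ R) (Q : Matrix κ μ R) :
    ((1 : Matrix l l R) ⊗ₖ P) * ((1 : Matrix l l R) ⊗ₖ Q) = (1 : Matrix l l R) ⊗ₖ (P * Q) := by
  rw [← mul_kronecker_mul, Matrix.one_mul]

end Matrix

theorem stmt_7 {n m p r : ℕ}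
    (K : ℂ → Matrix (Fin n) (Fin n) ℂ)
    (C : ℂ → Matrix (Fin p) (Fin n) ℂ)
    (B : ℂ → Matrix (Fin n) (Fin m) ℂ)
    (N : ℂ → Matrix (Fin n) (Fin m × Fin n) ℂ)
    (σ₁ σ₂ : ℂ) (hK1 : IsUnit (K σ₁)) (hK2 : IsUnit (K σ₂))
    (V W : Matrix (Fin n) (Fin r) ℂ)
    (hVspan : ∃ X, V * X = (K σ₁)⁻¹ * B σ₁)
    (hWspan : ∃ X, W * X = ((K σ₂)⁻¹)ᴴ * (C σ₂)ᴴ)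
    (hKhat1 : IsUnit (Wᴴ * K σ₁ * V)) (hKhat2 : IsUnit (Wᴴ * K σ₂ * V)) :
    (C σ₂ * V) * (Wᴴ * K σ₂ * V)⁻¹ *
        (Wᴴ * N σ₁ * ((1 : Matrix (Fin m) (Fin m) ℂ) ⊗ₖ V)) *
        ((1 : Matrix (Fin m) (Fin m) ℂ) ⊗ₖ ((Wᴴ * K σ₁ * V)⁻¹ * (Wᴴ * B σ₁)))
      = C σ₂ * (K σ₂)⁻¹ * N σ₁ *
        ((1 : Matrix (Fin m) (Fin m) ℂ) ⊗ₖ ((K σ₁)⁻¹ * B σ₁)) := by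
  have hCrow : ∃ Y : Matrix (Fin p) (Fin r) ℂ, Y * Wᴴ = C σ₂ * (K σ₂)⁻¹ := by
    simpa only [conjTranspose_mul, conjTranspose_conjTranspose] using exists_mul_conjTranspose_eq_of_exists_mul_eq hWspan
  calc (C σ₂ * V) * (Wᴴ * K σ₂ * V)⁻¹ *
        (Wᴴ * N σ₁ * ((1 : Matrix (Fin m) (Fin m) ℂ) ⊗ₖ V)) *
        ((1 : Matrix (Fin m) (Fin m) ℂ) ⊗ₖ ((Wᴴ * K σ₁ * V)⁻¹ * (Wᴴ * B σ₁)))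
      = (C σ₂ * V * (Wᴴ * K σ₂ * V)⁻¹ * Wᴴ) * N σ₁ *
          (((1 : Matrix (Fin m) (Fin m) ℂ) ⊗ₖ V) *
            ((1 : Matrix (Fin m) (Fin m) ℂ) ⊗ₖ ((Wᴴ * K σ₁ * V)⁻¹ * (Wᴴ * B σ₁)))) := by
        simp only [Matrix.mul_assoc]
    _ = C σ₂ * (K σ₂)⁻¹ * N σ₁ * ((1 : Matrix (Fin m) (Fin m) ℂ) ⊗ₖ ((K σ₁)⁻¹ * B σ₁)) := by
        rw [mul_mul_inv_mul_eq_mul_inv_of_exists_mul_eq hK2 hKhat2 hCrow,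
          one_kronecker_mul_one_kronecker,
          mul_inv_mul_mul_eq_inv_mul_of_exists_mul_eq hK1 hKhat1 hVspan]
end

section
/- Let C, K, B, N, H be matrix-valued functions as in the structured quadratic-bilinear setting, and let σ ∈ ℂ be such that K(σ) and K(2σ) are invertible. Define V₁ := K(σ)⁻¹B(σ) and W₁ := (K(2σ)⁻¹)ᴴ(C(2σ))ᴴ. Suppose V contains V₁ in its column span, W contains W₁ in its column span, and Wᴴ K(σ) V and Wᴴ K(2σ) V are invertible. Then the reduced second symmetric subsystem transfer function interpolates the full one at (σ,σ): with F₂(s₁,s₂) := (1/2) C(s₁+s₂) K(s₁+s₂)⁻¹ (H(s₁,s₂)(f₁(s₁)⊗f₁(s₂)) + H(s₂,s₁)(f₁(s₂)⊗f₁(s₁)) + N(s₁)(I_m⊗f₁(s₁)) + N(s₂)(I_m⊗f₁(s₂))) where f₁(s)=K(s)⁻¹B(s), one has F̂₂(σ,σ) = F₂(σ,σ), where F̂₂ is built from the projected quantities Ĉ(s)=C(s)V, K̂(s)=WᴴK(s)V, B̂(s)=WᴴB(s), N̂(s)=WᴴN(s)(I_m⊗V), Ĥ(s₁,s₂)=WᴴH(s₁,s₂)(V⊗V).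 -/
/-!
Write `K̂ = Wᴴ K V`. If `V X = K(σ)⁻¹ B(σ)`, then `K̂(σ) X = Wᴴ B(σ)`, so the reduced first
transfer function is `f̂₁(σ) = X` and `V f̂₁(σ) = f₁(σ)`. Dually, if `W Y = (C(2σ) K(2σ)⁻¹)ᴴ`,
then `C(2σ) V K̂(2σ)⁻¹ = Yᴴ`, so `C(2σ) V K̂(2σ)⁻¹ Wᴴ = C(2σ) K(2σ)⁻¹`. Substituting both
identities into the reduced second transfer function, the projections `V ⊗ V`, `I ⊗ V` and `Wᴴ`
all cancel.
-/

open Matrix Kronecker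

namespace Matrix

variable {n r α : Type*} [Fintype n] [CommRing α]

theorem mul_mul_kronecker_mul_kronecker {k l k' l' q q' : Type*} [Fintype k] [Fintype l]
    [Fintype k'] [Fintype l'] (Wt : Matrix r n α) (M : Matrix n (k × k') α)
    (V : Matrix k l α) (V' : Matrix k' l' α) (x : Matrix l q α) (x' : Matrix l' q' α) :
    Wt * M * (V ⊗ₖ V') * (x ⊗ₖ x') = Wt * (M * ((V * x) ⊗ₖ (V' * x'))) := by
  rw [Matrix.mul_assoc (Wt * M), ← mul_kronecker_mul, Matrix.mul_assoc]

variable {m p : Type*} [Fintype r] [DecidableEq r]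

theorem galerkin_inv_mul_eq_of_mul_eq {Wt : Matrix r n α} {A : Matrix n n α} {V : Matrix n r α}
    {X : Matrix r m α} {b : Matrix n m α} (hA : IsUnit (Wt * A * V)) (h : A * V * X = b) :
    (Wt * A * V)⁻¹ * (Wt * b) = X := by
  rw [← h, show Wt * (A * V * X) = Wt * A * V * X by simp only [Matrix.mul_assoc],
    nonsing_inv_mul_cancel_left _ _ ((isUnit_iff_isUnit_det _).mp hA)]

theorem mul_galerkin_inv_eq_of_mul_eq {Wt : Matrix r n α} {A : Matrix n n α} {V : Matrix n r α}
    {Y : Matrix p r α} {c : Matrix p n α} (hA : IsUnit (Wt * A * V)) (h : Y * Wt * A = c) :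
    c * V * (Wt * A * V)⁻¹ = Y := by
  rw [← h, show Y * Wt * A * V = Y * (Wt * A * V) by simp only [Matrix.mul_assoc],
    mul_nonsing_inv_cancel_right _ _ ((isUnit_iff_isUnit_det _).mp hA)]

end Matrix

theorem stmt_8 {n m p r : ℕ}
    (C : ℂ → Matrix (Fin p) (Fin n) ℂ)
    (K : ℂ → Matrix (Fin n) (Fin n) ℂ)
    (B : ℂ → Matrix (Fin n) (Fin m) ℂ)
    (N : ℂ → Matrix (Fin n) (Fin m × Fin n) ℂ)
    (H : ℂ → ℂ → Matrix (Fin n) (Fin n × Fin n) ℂ)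
    (σ : ℂ) (hK : IsUnit (K σ)) (hK2 : IsUnit (K (2 * σ)))
    (V W : Matrix (Fin n) (Fin r) ℂ)
    (V₁ : Matrix (Fin n) (Fin m) ℂ) (hV₁ : V₁ = (K σ)⁻¹ * B σ)
    (W₁ : Matrix (Fin n) (Fin p) ℂ)
    (hW₁ : W₁ = ((K (2 * σ))⁻¹)ᴴ * (C (2 * σ))ᴴ)
    (hVspan : ∃ X, V * X = V₁) (hWspan : ∃ X, W * X = W₁)
    (hKhat1 : IsUnit (Wᴴ * K σ * V)) (hKhat2 : IsUnit (Wᴴ * K (2 * σ) * V)) :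
    -- reduced quantities
    let Khat : ℂ → Matrix (Fin r) (Fin r) ℂ := fun s => Wᴴ * K s * V
    let Bhat : ℂ → Matrix (Fin r) (Fin m) ℂ := fun s => Wᴴ * B s
    let Nhat : ℂ → Matrix (Fin r) (Fin m × Fin r) ℂ :=
      fun s => Wᴴ * N s * ((1 : Matrix (Fin m) (Fin m) ℂ) ⊗ₖ V)
    let Hhat : ℂ → ℂ → Matrix (Fin r) (Fin r × Fin r) ℂ :=
      fun s₁ s₂ => Wᴴ * H s₁ s₂ * (V ⊗ₖ V)
    let f₁ : ℂ → Matrix (Fin n) (Fin m) ℂ := fun s => (K s)⁻¹ * B s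
    let f₁hat : ℂ → Matrix (Fin r) (Fin m) ℂ := fun s => (Khat s)⁻¹ * Bhat s
    -- second symmetric subsystem transfer functions at (σ, σ)
    ((1 : ℂ) / 2) • ((C (2 * σ) * V) * (Khat (2 * σ))⁻¹ *
        (Hhat σ σ * (f₁hat σ ⊗ₖ f₁hat σ) + Hhat σ σ * (f₁hat σ ⊗ₖ f₁hat σ) +
          Nhat σ * ((1 : Matrix (Fin m) (Fin m) ℂ) ⊗ₖ f₁hat σ) +
          Nhat σ * ((1 : Matrix (Fin m) (Fin m) ℂ) ⊗ₖ f₁hat σ)))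
      = ((1 : ℂ) / 2) • (C (2 * σ) * (K (2 * σ))⁻¹ *
        (H σ σ * (f₁ σ ⊗ₖ f₁ σ) + H σ σ * (f₁ σ ⊗ₖ f₁ σ) +
          N σ * ((1 : Matrix (Fin m) (Fin m) ℂ) ⊗ₖ f₁ σ) +
          N σ * ((1 : Matrix (Fin m) (Fin m) ℂ) ⊗ₖ f₁ σ))) := by
  intro Khat Bhat Nhat Hhat f₁ f₁hat
  obtain ⟨X, hX⟩ : ∃ X : Matrix (Fin r) (Fin m) ℂ, V * X = V₁ := hVspan
  obtain ⟨Y, hY⟩ : ∃ Y : Matrix (Fin r) (Fin p) ℂ, W * Y = W₁ := hWspan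
  have hVf : V * f₁hat σ = f₁ σ := by
    have hKVX : K σ * V * X = B σ := by
      rw [Matrix.mul_assoc, hX, hV₁, Matrix.mul_nonsing_inv_cancel_left _ _
        ((isUnit_iff_isUnit_det _).mp hK)]
    rw [show f₁hat σ = X from galerkin_inv_mul_eq_of_mul_eq hKhat1 hKVX, hX, hV₁]
  have hYW : Yᴴ * Wᴴ = C (2 * σ) * (K (2 * σ))⁻¹ := by
    simpa only [conjTranspose_mul, hW₁, conjTranspose_conjTranspose] using
      congrArg conjTranspose hY
  have hCVK : C (2 * σ) * V * (Khat (2 * σ))⁻¹ * Wᴴ = C (2 * σ) * (K (2 * σ))⁻¹ := by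
    have hYWK : Yᴴ * Wᴴ * K (2 * σ) = C (2 * σ) := by
      rw [hYW, Matrix.nonsing_inv_mul_cancel_right _ _ ((isUnit_iff_isUnit_det _).mp hK2)]
    rw [mul_galerkin_inv_eq_of_mul_eq hKhat2 hYWK, hYW]
  have hHhat : Hhat σ σ * (f₁hat σ ⊗ₖ f₁hat σ) = Wᴴ * (H σ σ * (f₁ σ ⊗ₖ f₁ σ)) := by
    rw [mul_mul_kronecker_mul_kronecker, hVf]
  have hNhat : Nhat σ * ((1 : Matrix (Fin m) (Fin m) ℂ) ⊗ₖ f₁hat σ)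
      = Wᴴ * (N σ * ((1 : Matrix (Fin m) (Fin m) ℂ) ⊗ₖ f₁ σ)) := by
    rw [mul_mul_kronecker_mul_kronecker, hVf, Matrix.one_mul]
  rw [hHhat, hNhat, ← Matrix.mul_add, ← Matrix.mul_add, ← Matrix.mul_add, ← Matrix.mul_assoc,
    hCVK]
end

section
/- Let C, K, B, N, H be matrix-valued functions and σ ∈ ℂ with K(σ), K(2σ), K(3σ) invertible. Define V₁ := K(σ)⁻¹B(σ), V₂ := K(2σ)⁻¹(H(σ,σ)(V₁⊗V₁) + N(σ)(I_m⊗V₁)), and W₂ := (K(3σ)⁻¹)ᴴ(C(3σ))ᴴ. Suppose V contains the columns of V₁ and V₂ in its column span, W contains the columns of W₂ in its column span, and Wᴴ K(sσ) V is invertible for s ∈ {1,2,3}. Then the reduced third symmetric subsystem transfer function interpolates the full one at (σ,σ,σ): F̂₃(σ,σ,σ) = F₃(σ,σ,σ), where F₃(σ,σ,σ) = (1/2) C(3σ) K(3σ)⁻¹ (H(2σ,σ)(V₂⊗V₁) + H(σ,2σ)(V₁⊗V₂) + N(2σ)(I_m⊗V₂)) and F̂₃ is the analogous expression with projected quantities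 Ĉ(s)=C(s)V, K̂(s)=WᴴK(s)V, B̂(s)=WᴴB(s), N̂(s)=WᴴN(s)(I_m⊗V), Ĥ(s₁,s₂)=WᴴH(s₁,s₂)(V⊗V), and with V̂₁ := K̂(σ)⁻¹B̂(σ), V̂₂ := K̂(2σ)⁻¹(Ĥ(σ,σ)(V̂₁⊗V̂₁)+N̂(σ)(I_m⊗V̂₁)). -/
open Matrix Kronecker

/-!
Every reduced quantity is obtained from a full one by a Petrov–Galerkin projection. If the
exact solution `x = K⁻¹ b` of a full linear system lies in the column span of `V`, then the
projected system `(Wᴴ K V) x̂ = Wᴴ b` is solved by the coefficients of `x` in that span, so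
`V x̂ = x`. Applied at `σ` and then at `2σ` (whose right-hand side is built from `V₁` through
`H` and `N`, and so projects correctly once `V V̂₁ = V₁`), this gives `V V̂₁ = V₁` and
`V V̂₂ = V₂`. Dually, if the row `C K⁻¹` at `3σ` lies in the row span of `Wᴴ`, then
`C V (Wᴴ K V)⁻¹ Wᴴ = C K⁻¹`. All three terms of `F̂₃` are `Wᴴ` times the corresponding full
terms, and the output identity removes the projection.
-/

namespace Matrix

variable {R : Type*} [CommRing R]

theorem mul_inv_projected_mul_eq_inv_mul {k l q : Type*} [Fintype k] [DecidableEq k]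
    [Fintype l] [DecidableEq l] (K : Matrix k k R) (V : Matrix k l R) (Wt : Matrix l k R)
    (b : Matrix k q R) (hK : IsUnit K) (hKhat : IsUnit (Wt * K * V))
    (hspan : ∃ X : Matrix l q R, V * X = K⁻¹ * b) :
    V * ((Wt * K * V)⁻¹ * (Wt * b)) = K⁻¹ * b := by
  obtain ⟨X, hX⟩ := hspan
  have hKX : Wt * K * V * X = Wt * b := by
    rw [Matrix.mul_assoc, Matrix.mul_assoc, hX,
      mul_nonsing_inv_cancel_left _ _ ((isUnit_iff_isUnit_det K).mp hK)]
  rw [← hKX, nonsing_inv_mul_cancel_left _ _ ((isUnit_iff_isUnit_det _).mp hKhat), hX]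

theorem mul_mul_inv_projected_mul_eq_mul_inv {k l q : Type*} [Fintype k] [DecidableEq k]
    [Fintype l] [DecidableEq l] (K : Matrix k k R) (V : Matrix k l R) (Wt : Matrix l k R)
    (c : Matrix q k R) (hK : IsUnit K) (hKhat : IsUnit (Wt * K * V))
    (hspan : ∃ Y : Matrix q l R, Y * Wt = c * K⁻¹) :
    c * V * (Wt * K * V)⁻¹ * Wt = c * K⁻¹ := by
  obtain ⟨Y, hY⟩ := hspan
  have hYK : Y * (Wt * K * V) = c * V := by
    rw [← Matrix.mul_assoc, ← Matrix.mul_assoc, hY,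
      nonsing_inv_mul_cancel_right _ _ ((isUnit_iff_isUnit_det K).mp hK)]
  rw [← hYK, mul_nonsing_inv_cancel_right _ _ ((isUnit_iff_isUnit_det _).mp hKhat), hY]

theorem projected_mul_kronecker_mul {k l q q' s s' t t' : Type*} [Fintype k] [Fintype q]
    [Fintype q'] [Fintype s] [Fintype s'] (Wt : Matrix l k R) (H : Matrix k (q × q') R)
    (V : Matrix q s R) (V' : Matrix q' s' R) (A : Matrix s t R) (B : Matrix s' t' R) :
    Wt * H * (V ⊗ₖ V') * (A ⊗ₖ B) = Wt * (H * ((V * A) ⊗ₖ (V' * B))) := by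
  rw [Matrix.mul_assoc, mul_kronecker_mul, Matrix.mul_assoc]

theorem mul_submatrix_id_right {a b c d : Type*} [Fintype b] (A : Matrix a b R)
    (B : Matrix b c R) (e : d → c) :
    (A * B).submatrix id e = A * B.submatrix id e := by
  rw [submatrix_mul A B id id e Function.bijective_id, submatrix_id_id]

end Matrix
theorem stmt_9 {n m p r : ℕ}
    (C : ℂ → Matrix (Fin p) (Fin n) ℂ)
    (K : ℂ → Matrix (Fin n) (Fin n) ℂ)
    (B : ℂ → Matrix (Fin n) (Fin m) ℂ)
    (N : ℂ → Matrix (Fin n) (Fin m × Fin n) ℂ)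
    (H : ℂ → ℂ → Matrix (Fin n) (Fin n × Fin n) ℂ)
    (σ : ℂ) (hK1 : IsUnit (K σ)) (hK2 : IsUnit (K (2 * σ)))
    (hK3 : IsUnit (K (3 * σ)))
    (V W : Matrix (Fin n) (Fin r) ℂ)
    (V₁ : Matrix (Fin n) (Fin m) ℂ) (hV₁ : V₁ = (K σ)⁻¹ * B σ)
    (V₂ : Matrix (Fin n) (Fin m × Fin m) ℂ)
    (hV₂ : V₂ = (K (2 * σ))⁻¹ *
      (H σ σ * (V₁ ⊗ₖ V₁) + N σ * ((1 : Matrix (Fin m) (Fin m) ℂ) ⊗ₖ V₁)))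
    (W₂ : Matrix (Fin n) (Fin p) ℂ)
    (hW₂ : W₂ = ((K (3 * σ))⁻¹)ᴴ * (C (3 * σ))ᴴ)
    (hVspan₁ : ∃ X, V * X = V₁) (hVspan₂ : ∃ X, V * X = V₂)
    (hWspan : ∃ X, W * X = W₂)
    (hKhat1 : IsUnit (Wᴴ * K σ * V)) (hKhat2 : IsUnit (Wᴴ * K (2 * σ) * V))
    (hKhat3 : IsUnit (Wᴴ * K (3 * σ) * V)) :
    let assoc := Equiv.prodAssoc (Fin m) (Fin m) (Fin m)
    let Khat : ℂ → Matrix (Fin r) (Fin r) ℂ := fun s => Wᴴ * K s * V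
    let Bhat : ℂ → Matrix (Fin r) (Fin m) ℂ := fun s => Wᴴ * B s
    let Nhat : ℂ → Matrix (Fin r) (Fin m × Fin r) ℂ :=
      fun s => Wᴴ * N s * ((1 : Matrix (Fin m) (Fin m) ℂ) ⊗ₖ V)
    let Hhat : ℂ → ℂ → Matrix (Fin r) (Fin r × Fin r) ℂ :=
      fun s₁ s₂ => Wᴴ * H s₁ s₂ * (V ⊗ₖ V)
    let V₁hat : Matrix (Fin r) (Fin m) ℂ := (Khat σ)⁻¹ * Bhat σ
    let V₂hat : Matrix (Fin r) (Fin m × Fin m) ℂ := (Khat (2 * σ))⁻¹ *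
      (Hhat σ σ * (V₁hat ⊗ₖ V₁hat) +
        Nhat σ * ((1 : Matrix (Fin m) (Fin m) ℂ) ⊗ₖ V₁hat))
    ((1 : ℂ) / 2) • ((C (3 * σ) * V) * (Khat (3 * σ))⁻¹ *
        ((Hhat (2 * σ) σ * (V₂hat ⊗ₖ V₁hat)).submatrix id assoc.symm +
          Hhat σ (2 * σ) * (V₁hat ⊗ₖ V₂hat) +
          Nhat (2 * σ) * ((1 : Matrix (Fin m) (Fin m) ℂ) ⊗ₖ V₂hat)))
      = ((1 : ℂ) / 2) • (C (3 * σ) * (K (3 * σ))⁻¹ *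
        ((H (2 * σ) σ * (V₂ ⊗ₖ V₁)).submatrix id assoc.symm +
          H σ (2 * σ) * (V₁ ⊗ₖ V₂) +
          N (2 * σ) * ((1 : Matrix (Fin m) (Fin m) ℂ) ⊗ₖ V₂))) := by
  intro assoc Khat Bhat Nhat Hhat V₁hat V₂hat
  have hVV₁ : V * V₁hat = V₁ := by
    rw [hV₁]
    exact mul_inv_projected_mul_eq_inv_mul (K σ) V Wᴴ (B σ) hK1 hKhat1 (hV₁ ▸ hVspan₁)
  have hVV₂ : V * V₂hat = V₂ := by
    have hrhs : Hhat σ σ * (V₁hat ⊗ₖ V₁hat) + Nhat σ * ((1 : Matrix (Fin m) (Fin m) ℂ) ⊗ₖ V₁hat)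
        = Wᴴ * (H σ σ * (V₁ ⊗ₖ V₁) + N σ * ((1 : Matrix (Fin m) (Fin m) ℂ) ⊗ₖ V₁)) := by
      simp only [Hhat, Nhat, projected_mul_kronecker_mul, hVV₁, Matrix.one_mul, Matrix.mul_add]
    simp only [V₂hat, hrhs, Khat]
    rw [hV₂]
    exact mul_inv_projected_mul_eq_inv_mul _ V Wᴴ _ hK2 hKhat2 (hV₂ ▸ hVspan₂)
  have hout : C (3 * σ) * V * (Khat (3 * σ))⁻¹ * Wᴴ = C (3 * σ) * (K (3 * σ))⁻¹ := by
    -- `hWspan`'s witness elaborates as a `CStarMatrix`; retype it before taking `ᴴ`.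
    obtain ⟨Y, hY⟩ : ∃ Y : Matrix (Fin r) (Fin p) ℂ, W * Y = W₂ := hWspan
    refine mul_mul_inv_projected_mul_eq_mul_inv _ V Wᴴ _ hK3 hKhat3 ⟨Yᴴ, ?_⟩
    rw [← conjTranspose_mul, hY, hW₂, conjTranspose_mul, conjTranspose_conjTranspose,
      conjTranspose_conjTranspose]
  simp only [Hhat, Nhat, projected_mul_kronecker_mul, hVV₁, hVV₂, Matrix.one_mul,
    mul_submatrix_id_right, ← Matrix.mul_add]
  rw [← Matrix.mul_assoc, hout]
end

section
/- Let K : ℂ → Matrix (Fin n) (Fin n) ℂ, B : ℂ → Matrix (Fin n) (Fin m) ℂ, σ ∈ ℂ with K(σ) invertible, and V, W ∈ Matrix (Fin n) (Fin r) ℂ with K̂ := Wᴴ K(σ) V invertible. If V contains V₁ := K(σ)⁻¹B(σ) in its column span, then V * (K̂⁻¹ * Wᴴ B(σ)) = V₁, i.e., the lifted reduced state V * V̂₁ with V̂₁ := K̂(σ)⁻¹B̂(σ) equals the full-order state V₁. -/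
open Matrix Kronecker

namespace Matrix

variable {ι κ μ R : Type*} [Fintype ι] [Fintype κ] [DecidableEq κ] [CommRing R]

theorem nonsing_inv_mul_projected_eq (L : Matrix κ ι R) {K : Matrix ι ι R} {V : Matrix ι κ R}
    {X : Matrix κ μ R} {B : Matrix ι μ R} (hKV : IsUnit (L * K * V)) (hB : K * (V * X) = B) :
    (L * K * V)⁻¹ * (L * B) = X := by
  have hLB : L * B = L * K * V * X := by simp only [← hB, Matrix.mul_assoc]
  rw [hLB, nonsing_inv_mul_cancel_left _ _ ((isUnit_iff_isUnit_det _).mp hKV)]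

end Matrix

theorem stmt_10 {n m r : ℕ}
    (K : ℂ → Matrix (Fin n) (Fin n) ℂ)
    (B : ℂ → Matrix (Fin n) (Fin m) ℂ)
    (σ : ℂ) (hK : IsUnit (K σ))
    (V W : Matrix (Fin n) (Fin r) ℂ)
    (hKhat : IsUnit (Wᴴ * K σ * V))
    (hVspan : ∃ X, V * X = (K σ)⁻¹ * B σ) :
    V * ((Wᴴ * K σ * V)⁻¹ * (Wᴴ * B σ)) = (K σ)⁻¹ * B σ := by
  obtain ⟨X, hX⟩ : ∃ X : Matrix (Fin r) (Fin m) ℂ, V * X = (K σ)⁻¹ * B σ := hVspan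
  have hsolves : K σ * (V * X) = B σ := by
    rw [hX, mul_nonsing_inv_cancel_left _ _ ((isUnit_iff_isUnit_det _).mp hK)]
  rw [nonsing_inv_mul_projected_eq Wᴴ hKhat hsolves, hX]
end

section
/- Let K : ℂ → Matrix (Fin n) (Fin n) ℂ, B : ℂ → Matrix (Fin n) (Fin m) ℂ, C : ℂ → Matrix (Fin p) (Fin n) ℂ, and σ₁, σ₂ ∈ ℂ with K(σ₁), K(σ₂) invertible. Suppose V contains K(σ₁)⁻¹B(σ₁) in its column span, W contains (K(σ₂)⁻¹)ᴴ(C(σ₂))ᴴ in its column span, and both Wᴴ K(σ₁) V and Wᴴ K(σ₂) V are invertible. Then the reduced linear transfer function Ĝ(s) = (C(s)V)(WᴴK(s)V)⁻¹(WᴴB(s)) satisfies Ĝ(σ₁) = G(σ₁) and Ĝ(σ₂) = G(σ₂), where G(s) = C(s)K(s)⁻¹B(s). -/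
open Matrix Kronecker

namespace Matrix

variable {R : Type*} [CommRing R] [StarRing R]
  {ι κ μ ρ : Type*} [Fintype ι] [DecidableEq ι] [Fintype κ] [DecidableEq κ]

theorem petrovGalerkin_eq_of_mul_eq_inv_mul_right {K : Matrix ι ι R} {B : Matrix ι μ R}
    (C : Matrix ρ ι R) {V W : Matrix ι κ R} {X : Matrix κ μ R}
    (hK : IsUnit K) (hKhat : IsUnit (Wᴴ * K * V)) (hV : V * X = K⁻¹ * B) :
    C * V * (Wᴴ * K * V)⁻¹ * (Wᴴ * B) = C * K⁻¹ * B := by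
  have hB : B = K * V * X := by
    rw [Matrix.mul_assoc, hV, ← Matrix.mul_assoc, mul_nonsing_inv _ ((isUnit_iff_isUnit_det K).mp hK),
      Matrix.one_mul]
  calc C * V * (Wᴴ * K * V)⁻¹ * (Wᴴ * B)
      = C * V * ((Wᴴ * K * V)⁻¹ * (Wᴴ * K * V)) * X := by rw [hB]; simp only [Matrix.mul_assoc]
    _ = C * (V * X) := by
      rw [nonsing_inv_mul _ ((isUnit_iff_isUnit_det _).mp hKhat), Matrix.mul_one, Matrix.mul_assoc]
    _ = C * K⁻¹ * B := by rw [hV, Matrix.mul_assoc]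

/-- The left-sided condition is the right-sided one for the conjugate-transposed system
`(Kᴴ, Cᴴ, Bᴴ)` with the roles of `V` and `W` exchanged. -/
theorem petrovGalerkin_eq_of_mul_eq_inv_mul_left {K : Matrix ι ι R} (B : Matrix ι μ R)
    {C : Matrix ρ ι R} {V W : Matrix ι κ R} {Y : Matrix κ ρ R}
    (hK : IsUnit K) (hKhat : IsUnit (Wᴴ * K * V)) (hW : W * Y = K⁻¹ᴴ * Cᴴ) :
    C * V * (Wᴴ * K * V)⁻¹ * (Wᴴ * B) = C * K⁻¹ * B := by
  rw [← conjTranspose_inj]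
  have hKhat_star : IsUnit (Vᴴ * Kᴴ * W) := by
    simpa only [conjTranspose_mul, conjTranspose_conjTranspose, Matrix.mul_assoc]
      using (isUnit_conjTranspose _).mpr hKhat
  rw [conjTranspose_nonsing_inv] at hW
  have hdual := petrovGalerkin_eq_of_mul_eq_inv_mul_right Bᴴ ((isUnit_conjTranspose K).mpr hK) hKhat_star hW
  simpa only [conjTranspose_mul, conjTranspose_conjTranspose, conjTranspose_nonsing_inv,
    Matrix.mul_assoc] using hdual

end Matrix

theorem stmt_15 {n m p r : ℕ}
    (K : ℂ → Matrix (Fin n) (Fin n) ℂ)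
    (B : ℂ → Matrix (Fin n) (Fin m) ℂ)
    (C : ℂ → Matrix (Fin p) (Fin n) ℂ)
    (σ₁ σ₂ : ℂ) (hK1 : IsUnit (K σ₁)) (hK2 : IsUnit (K σ₂))
    (V W : Matrix (Fin n) (Fin r) ℂ)
    (hVspan : ∃ X, V * X = (K σ₁)⁻¹ * B σ₁)
    (hWspan : ∃ X, W * X = ((K σ₂)⁻¹)ᴴ * (C σ₂)ᴴ)
    (hKhat1 : IsUnit (Wᴴ * K σ₁ * V)) (hKhat2 : IsUnit (Wᴴ * K σ₂ * V)) :
    (C σ₁ * V) * (Wᴴ * K σ₁ * V)⁻¹ * (Wᴴ * B σ₁) = C σ₁ * (K σ₁)⁻¹ * B σ₁ ∧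
      (C σ₂ * V) * (Wᴴ * K σ₂ * V)⁻¹ * (Wᴴ * B σ₂) = C σ₂ * (K σ₂)⁻¹ * B σ₂ := by
  obtain ⟨X, hX⟩ := hVspan
  obtain ⟨Y, hY⟩ := hWspan
  exact ⟨petrovGalerkin_eq_of_mul_eq_inv_mul_right _ hK1 hKhat1 hX,
    petrovGalerkin_eq_of_mul_eq_inv_mul_left _ hK2 hKhat2 hY⟩
end

section
/- Let K : ℂ → Matrix (Fin n) (Fin n) ℂ, B : ℂ → Matrix (Fin n) (Fin m) ℂ, N : ℂ → Matrix (Fin n) (Fin (n*m)) ℂ, H : ℂ → ℂ → Matrix (Fin n) (Fin (n*n)) ℂ, and σ ∈ ℂ with K(σ) and K(2σ) invertible. Define V₁ := K(σ)⁻¹B(σ) and V₂ := K(2σ)⁻¹(H(σ,σ)(V₁⊗V₁) + N(σ)(I_m⊗V₁)). Let V, W ∈ Matrix (Fin n) (Fin r) ℂ with V containing the columns of V₁ and V₂ in its column span and with WᴴK(σ)V and WᴴK(2σ)V invertible. Then the reduced states V̂₁ := K̂(σ)⁻¹B̂(σ) and V̂₂ := K̂(2σ)⁻¹(Ĥ(σ,σ)(V̂₁⊗V̂₁)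 + N̂(σ)(I_m⊗V̂₁)), where K̂(s)=WᴴK(s)V, B̂(s)=WᴴB(s), N̂(s)=WᴴN(s)(I_m⊗V), Ĥ(s₁,s₂)=WᴴH(s₁,s₂)(V⊗V), satisfy V * V̂₁ = V₁ and V * V̂₂ = V₂. -/
/-!
Petrov–Galerkin projection reproduces every full-order solution that lies in the trial space:
if `K x = b` and `x = V X`, then `Wᴴ K V X = Wᴴ b`, so the reduced solution is `X` and lifts back
to `x`. At the first level this gives `V V̂₁ = V₁`. Since `(V ⊗ V)(V̂₁ ⊗ V̂₁) = V₁ ⊗ V₁` and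
`(I ⊗ V)(I ⊗ V̂₁) = I ⊗ V₁`, the reduced second-level right-hand side is then exactly `Wᴴ` times
the full one, and the same argument gives `V V̂₂ = V₂`.
-/

open Matrix Kronecker

namespace Matrix

variable {R : Type*} [CommRing R] {n r : Type*} [Fintype n] [Fintype r]

theorem mul_inv_mul_projection_eq_inv_mul {p : Type*} [DecidableEq n] [DecidableEq r]
    (L : Matrix r n R) {K : Matrix n n R} {V : Matrix n r R} {b : Matrix n p R}
    (hK : IsUnit K) (hKr : IsUnit (L * K * V))
    (hspan : ∃ X : Matrix r p R, V * X = K⁻¹ * b) :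
    V * ((L * K * V)⁻¹ * (L * b)) = K⁻¹ * b := by
  obtain ⟨X, hX⟩ := hspan
  have hb : L * b = L * K * V * X := by
    rw [Matrix.mul_assoc, Matrix.mul_assoc, hX,
      mul_nonsing_inv_cancel_left _ _ ((isUnit_iff_isUnit_det _).mp hK)]
  rw [hb, nonsing_inv_mul_cancel_left _ _ ((isUnit_iff_isUnit_det _).mp hKr), hX]

variable {m : Type*} [Fintype m] [DecidableEq m]

theorem projected_quadratic_bilinear_term_eq (L : Matrix r n R)
    (H : Matrix n (n × n) R) (N : Matrix n (m × n) R) (V : Matrix n r R) (X : Matrix r m R) :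
    L * H * (V ⊗ₖ V) * (X ⊗ₖ X) + L * N * ((1 : Matrix m m R) ⊗ₖ V) * ((1 : Matrix m m R) ⊗ₖ X) =
      L * (H * ((V * X) ⊗ₖ (V * X)) + N * ((1 : Matrix m m R) ⊗ₖ (V * X))) := by
  rw [Matrix.mul_assoc (L * H), Matrix.mul_assoc (L * N), ← mul_kronecker_mul,
    ← mul_kronecker_mul, Matrix.one_mul, Matrix.mul_assoc, Matrix.mul_assoc, Matrix.mul_add]

end Matrix

theorem stmt_19 {n m r : ℕ}
    (K : ℂ → Matrix (Fin n) (Fin n) ℂ)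
    (B : ℂ → Matrix (Fin n) (Fin m) ℂ)
    (N : ℂ → Matrix (Fin n) (Fin m × Fin n) ℂ)
    (H : ℂ → ℂ → Matrix (Fin n) (Fin n × Fin n) ℂ)
    (σ : ℂ) (hK1 : IsUnit (K σ)) (hK2 : IsUnit (K (2 * σ)))
    (V W : Matrix (Fin n) (Fin r) ℂ)
    (V₁ : Matrix (Fin n) (Fin m) ℂ) (hV₁ : V₁ = (K σ)⁻¹ * B σ)
    (V₂ : Matrix (Fin n) (Fin m × Fin m) ℂ)
    (hV₂ : V₂ = (K (2 * σ))⁻¹ *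
      (H σ σ * (V₁ ⊗ₖ V₁) + N σ * ((1 : Matrix (Fin m) (Fin m) ℂ) ⊗ₖ V₁)))
    (hVspan₁ : ∃ X, V * X = V₁) (hVspan₂ : ∃ X, V * X = V₂)
    (hKhat1 : IsUnit (Wᴴ * K σ * V)) (hKhat2 : IsUnit (Wᴴ * K (2 * σ) * V)) :
    let Khat : ℂ → Matrix (Fin r) (Fin r) ℂ := fun s => Wᴴ * K s * V
    let Bhat : ℂ → Matrix (Fin r) (Fin m) ℂ := fun s => Wᴴ * B s
    let Nhat : ℂ → Matrix (Fin r) (Fin m × Fin r) ℂ :=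
      fun s => Wᴴ * N s * ((1 : Matrix (Fin m) (Fin m) ℂ) ⊗ₖ V)
    let Hhat : ℂ → ℂ → Matrix (Fin r) (Fin r × Fin r) ℂ :=
      fun s₁ s₂ => Wᴴ * H s₁ s₂ * (V ⊗ₖ V)
    let V₁hat : Matrix (Fin r) (Fin m) ℂ := (Khat σ)⁻¹ * Bhat σ
    let V₂hat : Matrix (Fin r) (Fin m × Fin m) ℂ := (Khat (2 * σ))⁻¹ *
      (Hhat σ σ * (V₁hat ⊗ₖ V₁hat) +
        Nhat σ * ((1 : Matrix (Fin m) (Fin m) ℂ) ⊗ₖ V₁hat))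
    V * V₁hat = V₁ ∧ V * V₂hat = V₂ := by
  intro Khat Bhat Nhat Hhat V₁hat V₂hat
  -- Elaborated without an ascription, the witnesses are typed `CStarMatrix`.
  replace hVspan₁ : ∃ X : Matrix (Fin r) (Fin m) ℂ, V * X = V₁ := hVspan₁
  replace hVspan₂ : ∃ X : Matrix (Fin r) (Fin m × Fin m) ℂ, V * X = V₂ := hVspan₂
  have hlift₁ : V * V₁hat = V₁ := by
    subst hV₁
    exact mul_inv_mul_projection_eq_inv_mul Wᴴ hK1 hKhat1 hVspan₁
  have hrhs₂ : Hhat σ σ * (V₁hat ⊗ₖ V₁hat) + Nhat σ * ((1 : Matrix (Fin m) (Fin m) ℂ) ⊗ₖ V₁hat) =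
      Wᴴ * (H σ σ * (V₁ ⊗ₖ V₁) + N σ * ((1 : Matrix (Fin m) (Fin m) ℂ) ⊗ₖ V₁)) := by
    rw [← hlift₁]
    exact projected_quadratic_bilinear_term_eq _ _ _ _ _
  refine ⟨hlift₁, ?_⟩
  subst hV₂
  change V * ((Khat (2 * σ))⁻¹ * _) = _
  rw [hrhs₂]
  exact mul_inv_mul_projection_eq_inv_mul Wᴴ hK2 hKhat2 hVspan₂
end
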